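/- Let X : Ω → ℝⁿ and ε : Ω → ℝᵐ be square-integrable random vectors on a probability space, with X and ε independent and E[ε] = 0. Let F ∈ ℝ^{m×n}, set Y = F X + ε, and suppose L_X ∈ ℝ^{n×n} is an invertible matrix with E[X Xᵀ] = L_X L_Xᵀ. Then F is the unique minimizer of the Bayes risk E‖A X − Y‖₂² over all A ∈ ℝ^{m×n}: for every A ∈ ℝ^{m×n}, E‖F X − Y‖₂² ≤ E‖A X − Y‖₂², with equality only if A = F. -/

import Mathlib

/-
Writing the residual as `(A - F) X - ε`, independence and `E[ε] = 0` make `X` and `ε`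
uncorrelated, so the Bayes risk splits as `E‖(A - F) X‖² + E‖ε‖²`, and the first term is
`tr((A - F) Γ_X (A - F)ᵀ) = ‖(A - F) L_X‖²_F`. It is nonnegative and vanishes only when
`(A - F) L_X = 0`, i.e. `A = F` because `L_X` is invertible.
-/

open Matrix MeasureTheory

/-- Second (cross-)moment matrix `E[X Yᵀ]` of two random vectors. -/
noncomputable def secondMoment {Ω : Type} [MeasurableSpace Ω] (μ : Measure Ω)
    {n m : ℕ} (X : Ω → Fin n → ℝ) (Y : Ω → Fin m → ℝ) : Matrix (Fin n) (Fin m) ℝ :=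
  Matrix.of fun i j => ∫ ω, X ω i * Y ω j ∂μ

open ProbabilityTheory

section SecondMoment

variable {Ω : Type} [MeasurableSpace Ω] {μ : Measure Ω} {k n m : ℕ}

lemma secondMoment_transpose (X : Ω → Fin n → ℝ) (Y : Ω → Fin m → ℝ) :
    (secondMoment μ X Y)ᵀ = secondMoment μ Y X := by
  ext i j
  simp only [secondMoment, transpose_apply, of_apply, mul_comm]

lemma MeasureTheory.MemLp.integrable_apply_mul_apply {X : Ω → Fin n → ℝ} {Y : Ω → Fin m → ℝ}
    (hX : MemLp X 2 μ) (hY : MemLp Y 2 μ) (i : Fin n) (j : Fin m) :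
    Integrable (fun ω => X ω i * Y ω j) μ :=
  (hX.eval i).integrable_mul (hY.eval j)

lemma MeasureTheory.MemLp.mulVec {X : Ω → Fin n → ℝ} (hX : MemLp X 2 μ)
    (B : Matrix (Fin k) (Fin n) ℝ) :
    MemLp (fun ω => B *ᵥ X ω) 2 μ :=
  (mulVecLin B).toContinuousLinearMap.comp_memLp' hX

lemma secondMoment_mulVec_left {X : Ω → Fin n → ℝ} {Y : Ω → Fin m → ℝ}
    (hX : MemLp X 2 μ) (hY : MemLp Y 2 μ) (B : Matrix (Fin k) (Fin n) ℝ) :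
    secondMoment μ (fun ω => B *ᵥ X ω) Y = B * secondMoment μ X Y := by
  ext i j
  simp only [secondMoment, of_apply, mul_apply, mulVec, dotProduct, Finset.sum_mul, mul_assoc]
  rw [integral_finsetSum _ fun l _ => (hX.integrable_apply_mul_apply hY l j).const_mul _]
  simp only [integral_const_mul]

lemma secondMoment_mulVec_right {X : Ω → Fin n → ℝ} {Y : Ω → Fin m → ℝ}
    (hX : MemLp X 2 μ) (hY : MemLp Y 2 μ) (C : Matrix (Fin k) (Fin m) ℝ) :
    secondMoment μ X (fun ω => C *ᵥ Y ω) = secondMoment μ X Y * Cᵀ := by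
  rw [← secondMoment_transpose, secondMoment_mulVec_left hY hX, transpose_mul,
    secondMoment_transpose]

lemma secondMoment_sub_self_of_secondMoment_eq_zero {U V : Ω → Fin m → ℝ}
    (hU : MemLp U 2 μ) (hV : MemLp V 2 μ) (hUV : secondMoment μ U V = 0) :
    secondMoment μ (U - V) (U - V) = secondMoment μ U U + secondMoment μ V V := by
  have hVU : secondMoment μ V U = 0 := by rw [← secondMoment_transpose, hUV, transpose_zero]
  ext i j
  have hUVij := congrFun (congrFun hUV i) j
  have hVUij := congrFun (congrFun hVU i) j
  simp only [secondMoment, of_apply, Matrix.zero_apply, Pi.sub_apply, Matrix.add_apply]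
    at hUVij hVUij ⊢
  have expand : ∀ ω, (U ω i - V ω i) * (U ω j - V ω j)
      = U ω i * U ω j - U ω i * V ω j - V ω i * U ω j + V ω i * V ω j := fun ω => by ring
  have hUU := hU.integrable_apply_mul_apply hU i j
  have hUV' := hU.integrable_apply_mul_apply hV i j
  have hVU' := hV.integrable_apply_mul_apply hU i j
  have hVV := hV.integrable_apply_mul_apply hV i j
  simp only [expand]
  rw [integral_add (by fun_prop) hVV, integral_sub (by fun_prop) hVU', integral_sub hUU hUV',
    hUVij, hVUij, sub_zero, sub_zero]

lemma integral_sum_sq_eq_trace_secondMoment {U : Ω → Fin m → ℝ} (hU : MemLp U 2 μ) :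
    ∫ ω, ∑ i, U ω i ^ 2 ∂μ = (secondMoment μ U U).trace := by
  simp only [trace, diag_apply, secondMoment, of_apply, sq]
  exact integral_finsetSum _ fun i _ => hU.integrable_apply_mul_apply hU i i

lemma secondMoment_eq_zero_of_indepFun {X : Ω → Fin n → ℝ} {Y : Ω → Fin m → ℝ}
    (hXY : IndepFun X Y μ) (hX : AEStronglyMeasurable X μ) (hY : Integrable Y μ)
    (hY0 : ∫ ω, Y ω ∂μ = 0) :
    secondMoment μ X Y = 0 := by
  ext i j
  have hXYij : IndepFun (fun ω => X ω i) (fun ω => Y ω j) μ :=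
    hXY.comp (measurable_pi_apply i) (measurable_pi_apply j)
  have hYj : ∫ ω, Y ω j ∂μ = 0 := by rw [← eval_integral hY.eval, hY0, Pi.zero_apply]
  rw [secondMoment, of_apply, hXYij.integral_fun_mul_eq_mul_integral
    ((continuous_apply i).comp_aestronglyMeasurable hX) (hY.eval j).aestronglyMeasurable, hYj,
    mul_zero, Matrix.zero_apply]

lemma integral_sum_sq_mulVec_sub {X : Ω → Fin n → ℝ} {ε : Ω → Fin m → ℝ}
    (hX : MemLp X 2 μ) (hε : MemLp ε 2 μ) (hXε : secondMoment μ X ε = 0)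
    (B : Matrix (Fin m) (Fin n) ℝ) :
    ∫ ω, ∑ i, (B *ᵥ X ω - ε ω) i ^ 2 ∂μ
      = (B * secondMoment μ X X * Bᵀ).trace + ∫ ω, ∑ i, ε ω i ^ 2 ∂μ := by
  have hBX := hX.mulVec B
  have hBXε : secondMoment μ (fun ω => B *ᵥ X ω) ε = 0 := by
    rw [secondMoment_mulVec_left hX hε, hXε, Matrix.mul_zero]
  calc ∫ ω, ∑ i, (B *ᵥ X ω - ε ω) i ^ 2 ∂μ
      = (secondMoment μ ((fun ω => B *ᵥ X ω) - ε) ((fun ω => B *ᵥ X ω) - ε)).trace :=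
        integral_sum_sq_eq_trace_secondMoment (hBX.sub hε)
    _ = _ := by
      rw [secondMoment_sub_self_of_secondMoment_eq_zero hBX hε hBXε, trace_add,
        secondMoment_mulVec_left hX hBX, secondMoment_mulVec_right hX hX,
        integral_sum_sq_eq_trace_secondMoment hε, Matrix.mul_assoc]

end SecondMoment

/-- If the symmetric factor `L_X` of `Γ_X` is invertible, then `F` is the unique
minimizer of the Bayes risk `E‖A X − Y‖₂²` over all (unconstrained) `A`. -/
theorem forward_full_rank_identity_recovery {Ω : Type} [MeasurableSpace Ω]
    (μ : Measure Ω) [IsProbabilityMeasure μ] {n m : ℕ}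
    (X : Ω → Fin n → ℝ) (ε : Ω → Fin m → ℝ)
    (hX : MemLp X 2 μ) (hε : MemLp ε 2 μ)
    (hindep : ProbabilityTheory.IndepFun X ε μ)
    (hmean : (∫ ω, ε ω ∂μ) = 0)
    (F : Matrix (Fin m) (Fin n) ℝ)
    (LX : Matrix (Fin n) (Fin n) ℝ) (hLXinv : IsUnit LX)
    (hLX : secondMoment μ X X = LX * LXᵀ) :
    ∀ A : Matrix (Fin m) (Fin n) ℝ,
      (∫ ω, ∑ i, (F *ᵥ X ω - (F *ᵥ X ω + ε ω)) i ^ 2 ∂μ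
          ≤ ∫ ω, ∑ i, (A *ᵥ X ω - (F *ᵥ X ω + ε ω)) i ^ 2 ∂μ) ∧
      ((∫ ω, ∑ i, (A *ᵥ X ω - (F *ᵥ X ω + ε ω)) i ^ 2 ∂μ)
            = (∫ ω, ∑ i, (F *ᵥ X ω - (F *ᵥ X ω + ε ω)) i ^ 2 ∂μ)
          → A = F) := by
  intro A
  have hXε : secondMoment μ X ε = 0 := secondMoment_eq_zero_of_indepFun hindep
    hX.aestronglyMeasurable (hε.integrable one_le_two) hmean
  have risk : ∀ A : Matrix (Fin m) (Fin n) ℝ,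
      ∫ ω, ∑ i, (A *ᵥ X ω - (F *ᵥ X ω + ε ω)) i ^ 2 ∂μ
        = ((A - F) * LX * ((A - F) * LX)ᵀ).trace + ∫ ω, ∑ i, ε ω i ^ 2 ∂μ := by
    intro A
    have residual : ∀ ω, A *ᵥ X ω - (F *ᵥ X ω + ε ω) = (A - F) *ᵥ X ω - ε ω := fun ω => by
      rw [sub_mulVec]; abel
    simp_rw [residual]
    rw [integral_sum_sq_mulVec_sub hX hε hXε, hLX, transpose_mul, Matrix.mul_assoc,
      Matrix.mul_assoc, Matrix.mul_assoc]
  rw [risk A, risk F, sub_self, Matrix.zero_mul, Matrix.zero_mul, trace_zero, zero_add]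
  refine ⟨le_add_of_nonneg_left ?_, fun h => ?_⟩
  · simpa using (posSemidef_self_mul_conjTranspose ((A - F) * LX)).trace_nonneg
  · have hBL : (A - F) * LX = 0 := by
      simpa using trace_mul_conjTranspose_self_eq_zero_iff.mp (add_eq_right.mp h)
    let := hLXinv.invertible
    rwa [Matrix.sub_mul, sub_eq_zero, Matrix.mul_left_inj_of_invertible] at hBL
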